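/- For d ≥ 2, the eigenspace of K_d for the eigenvalue −1 has dimension (d−1)². -/

import Mathlib

def Kd (d : ℕ) : Matrix (Fin d × Fin d) (Fin d × Fin d) ℚ :=
  Matrix.of fun p q => if p.1 = q.1 ∨ p.2 = q.2 then 1 else 0

/-!
`(K_d x)(i, j) = R_i + C_j - x(i, j)`, where `R` and `C` are the row and column sums of `x`, so
`x` is a `-1`-eigenvector exactly when `R_i + C_j = 0` for all `i, j`. Summing these relations
gives `2d · ∑ R = 0`, and then `d · R_i = d · C_j = 0`: in characteristic zero all row and
column sums vanish. The margin map `x ↦ (R, C)` hits every pair with `∑ R = ∑ C`, a space of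
dimension `2d - 1`, so its kernel has dimension `d² - (2d - 1) = (d - 1)²`.
-/

open Module Finset Matrix

section Margins

variable {K : Type*} [Field K]

theorem rowSums_eq_zero_and_colSums_eq_zero_of_add_eq_zero [CharZero K]
    {ι κ : Type*} [Fintype ι] [Fintype κ] (x : ι × κ → K)
    (h : ∀ i j, ∑ j', x (i, j') + ∑ i', x (i', j) = 0) :
    (∀ i, ∑ j, x (i, j) = 0) ∧ ∀ j, ∑ i, x (i, j) = 0 := by
  rcases isEmpty_or_nonempty ι with _ | _
  · simp
  rcases isEmpty_or_nonempty κ with _ | _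
  · simp
  have hι0 : (Fintype.card ι : K) ≠ 0 := Nat.cast_ne_zero.2 Fintype.card_ne_zero
  have hκ0 : (Fintype.card κ : K) ≠ 0 := Nat.cast_ne_zero.2 Fintype.card_ne_zero
  set T := ∑ i, ∑ j, x (i, j)
  have hRow : ∀ i, (Fintype.card κ : K) * ∑ j, x (i, j) + T = 0 := fun i => by
    have := sum_eq_zero (s := univ) fun j _ => h i j
    rwa [sum_add_distrib, sum_const, card_univ, nsmul_eq_mul, sum_comm] at this
  have hCol : ∀ j, T + (Fintype.card ι : K) * ∑ i, x (i, j) = 0 := fun j => by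
    have := sum_eq_zero (s := univ) fun i _ => h i j
    rwa [sum_add_distrib, sum_const, card_univ, nsmul_eq_mul] at this
  have hT : T = 0 := by
    have := sum_eq_zero (s := univ) fun i _ => hRow i
    rw [sum_add_distrib, ← mul_sum, sum_const, card_univ, nsmul_eq_mul, ← add_mul] at this
    exact (mul_eq_zero.1 this).resolve_left (by norm_cast; positivity)
  refine ⟨fun i => ?_, fun j => ?_⟩
  · simpa [hT, hκ0] using hRow i
  · simpa [hT, hι0] using hCol j

variable (K) in
/-- The zeroth column sum is left out: it is the grand total minus the other column sums, and
without it the map becomes surjective. -/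
def marginMap (m n : ℕ) :
    (Fin (m + 1) × Fin (n + 1) → K) →ₗ[K] (Fin (m + 1) → K) × (Fin n → K) where
  toFun x := (fun i => ∑ j, x (i, j), fun j => ∑ i, x (i, j.succ))
  map_add' _ _ := by ext <;> simp [sum_add_distrib]
  map_smul' _ _ := by ext <;> simp [mul_sum]

theorem marginMap_surjective (m n : ℕ) : Function.Surjective (marginMap K m n) := by
  rintro ⟨r, c⟩
  refine ⟨fun p => Fin.cases (r p.1 - if p.1 = 0 then ∑ j, c j else 0)
    (fun j => if p.1 = 0 then c j else 0) p.2, ?_⟩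
  ext i
  · by_cases hi : i = 0 <;> simp [marginMap, Fin.sum_univ_succ, hi]
  · simp [marginMap]

theorem mem_ker_marginMap {m n : ℕ} (x : Fin (m + 1) × Fin (n + 1) → K) :
    x ∈ LinearMap.ker (marginMap K m n) ↔
      (∀ i, ∑ j, x (i, j) = 0) ∧ ∀ j, ∑ i, x (i, j) = 0 := by
  simp only [LinearMap.mem_ker, marginMap, LinearMap.coe_mk, AddHom.coe_mk, Prod.ext_iff,
    funext_iff, Prod.fst_zero, Prod.snd_zero, Pi.zero_apply]
  refine ⟨fun ⟨hR, hC⟩ => ⟨hR, Fin.cases ?_ hC⟩, fun ⟨hR, hC⟩ => ⟨hR, fun j => hC _⟩⟩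
  have hT : ∑ j, ∑ i, x (i, j) = 0 := by rw [sum_comm]; simp [hR]
  rw [Fin.sum_univ_succ] at hT
  simpa [hC] using hT

theorem finrank_ker_marginMap (m n : ℕ) :
    finrank K (LinearMap.ker (marginMap K m n)) = m * n := by
  have h := LinearMap.finrank_range_add_finrank_ker (marginMap K m n)
  rw [LinearMap.range_eq_top.2 (marginMap_surjective m n), finrank_top, finrank_prod,
    finrank_fin_fun, finrank_fin_fun, finrank_fintype_fun_eq_card, Fintype.card_prod,
    Fintype.card_fin, Fintype.card_fin] at h
  rw [← Nat.add_right_cancel_iff (n := m + 1 + n), add_comm, h]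
  ring

end Margins

theorem Kd_mulVec_apply (d : ℕ) (x : Fin d × Fin d → ℚ) (p : Fin d × Fin d) :
    (Kd d *ᵥ x) p = ∑ j, x (p.1, j) + ∑ i, x (i, p.2) - x p := by
  have hentry : ∀ a b, Kd d p (a, b) * x (a, b) =
      (if p.1 = a then x (a, b) else 0) + (if p.2 = b then x (a, b) else 0) -
        if p.1 = a then (if p.2 = b then x (a, b) else 0) else 0 := by
    intro a b
    by_cases h1 : p.1 = a <;> by_cases h2 : p.2 = b <;> simp [Kd, h1, h2]
  simp only [mulVec, dotProduct, Fintype.sum_prod_type, hentry, sum_add_distrib, sum_sub_distrib,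
    sum_ite_irrel, sum_const_zero, sum_ite_eq, mem_univ, if_true]

theorem mem_eigenspace_Kd_negOne_iff {d : ℕ} (x : Fin d × Fin d → ℚ) :
    x ∈ End.eigenspace (Kd d).mulVecLin (-1) ↔
      ∀ i j, ∑ j', x (i, j') + ∑ i', x (i', j) = 0 := by
  simp only [End.mem_eigenspace_iff, mulVecLin_apply, funext_iff, Prod.forall, Kd_mulVec_apply,
    neg_smul, one_smul, Pi.neg_apply, sub_eq_neg_self]

theorem eigenspace_Kd_negOne_eq_ker_marginMap (e : ℕ) :
    End.eigenspace (Kd (e + 1)).mulVecLin (-1) = LinearMap.ker (marginMap ℚ e e) := by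
  ext x
  rw [mem_eigenspace_Kd_negOne_iff, mem_ker_marginMap]
  exact ⟨rowSums_eq_zero_and_colSums_eq_zero_of_add_eq_zero x,
    fun ⟨hR, hC⟩ i j => by rw [hR, hC, add_zero]⟩

theorem Kd_eigenspace_negOne_general (d : ℕ) :
    Module.finrank ℚ
      (Module.End.eigenspace (Matrix.mulVecLin (Kd d)) (-1)) = (d - 1) ^ 2 := by
  rcases d with _ | e
  · exact finrank_zero_of_subsingleton
  · rw [eigenspace_Kd_negOne_eq_ker_marginMap, finrank_ker_marginMap, Nat.add_sub_cancel, sq]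

theorem Kd_eigenspace_negOne (d : ℕ) (hd : 2 ≤ d) :
    Module.finrank ℚ
      (Module.End.eigenspace (Matrix.mulVecLin (Kd d)) (-1)) = (d - 1) ^ 2 :=
  Kd_eigenspace_negOne_general d
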